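/- arXiv:1512.09072 — 6 statements merged into one kernel-verified Lean document; each statement's English description precedes it below -/
import Mathlib

section
/- For every permutation w of {1,…,n}, the function h_w : {1,…,n} → {1,…,n} defined by h_w(j) = j if D_w(j) = ∅ and h_w(j) = max{q : (p,q) ∈ D_w(j)} otherwise, is a Hessenberg function, i.e. h_w(j) ≥ j for all j ∈ {1,…,n} and h_w(j+1) ≥ h_w(j) for all j ∈ {1,…,n−1}. -/
/-- For a permutation `w` of `{1,…,n}` (given as a function `ℕ → ℕ`) and `j`,
`Dw n w j = {(p,q) : 1 ≤ p ≤ j < q ≤ n and w(p) = w(q) + 1}`. -/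
def Dw (n : ℕ) (w : ℕ → ℕ) (j : ℕ) : Finset (ℕ × ℕ) :=
  (Finset.Icc 1 j ×ˢ Finset.Icc (j + 1) n).filter fun pq => w pq.1 = w pq.2 + 1

/-- `h_w(j) = j` if `D_w(j) = ∅`, and otherwise `h_w(j) = max{q : (p,q) ∈ D_w(j)}`
(the `sup` below is the maximum since the set is nonempty). -/
def hwf (n : ℕ) (w : ℕ → ℕ) (j : ℕ) : ℕ :=
  if Dw n w j = ∅ then j else (Dw n w j).sup fun pq => pq.2

lemma mem_Dw {n : ℕ} {w : ℕ → ℕ} {j : ℕ} {pq : ℕ × ℕ} :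
    pq ∈ Dw n w j ↔ (1 ≤ pq.1 ∧ pq.1 ≤ j) ∧ (j + 1 ≤ pq.2 ∧ pq.2 ≤ n) ∧ w pq.1 = w pq.2 + 1 := by
  simp [Dw, Finset.mem_filter, Finset.mem_product, Finset.mem_Icc, and_assoc]

lemma hwf_lower (n : ℕ) (w : ℕ → ℕ) (j : ℕ) : j ≤ hwf n w j := by
  unfold hwf
  split
  · exact le_refl j
  · next h =>
    obtain ⟨pq, hpq⟩ := Finset.nonempty_iff_ne_empty.mpr h
    have h2 := (mem_Dw.mp hpq).2.1.1
    calc j ≤ pq.2 := by omega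
      _ ≤ _ := Finset.le_sup hpq

lemma hwf_upper (n : ℕ) (w : ℕ → ℕ) (j : ℕ) (hj : j ≤ n) : hwf n w j ≤ n := by
  unfold hwf
  split
  · exact hj
  · exact Finset.sup_le fun pq hpq => (mem_Dw.mp hpq).2.1.2

/-- `h_w` is a Hessenberg function: `j ≤ h_w(j) ≤ n` for `j ∈ {1,…,n}` and
`h_w(j) ≤ h_w(j+1)` for `j ∈ {1,…,n-1}`.  A permutation of `{1,…,n}` is modelled
as `w : Equiv.Perm ℕ` fixing every point outside `{1,…,n}`. -/
theorem stmt2 (n : ℕ) (w : Equiv.Perm ℕ) (hw : ∀ i, i ∉ Finset.Icc 1 n → w i = i) :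
    (∀ j, 1 ≤ j → j ≤ n → j ≤ hwf n ⇑w j ∧ hwf n ⇑w j ≤ n) ∧
    (∀ j, 1 ≤ j → j + 1 ≤ n → hwf n ⇑w j ≤ hwf n ⇑w (j + 1)) := by
  constructor
  · exact fun j _ hjn => ⟨hwf_lower n _ j, hwf_upper n _ j hjn⟩
  · intro j _ hjn
    by_cases h : Dw n ⇑w j = ∅
    · rw [hwf, if_pos h]
      calc j ≤ j + 1 := by omega
        _ ≤ hwf n ⇑w (j + 1) := hwf_lower n _ (j + 1)
    · rw [hwf, if_neg h]
      apply Finset.sup_le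
      intro pq hpq
      obtain ⟨⟨hp1, hp2⟩, ⟨hq1, hq2⟩, hwpq⟩ := mem_Dw.mp hpq
      rcases Nat.lt_or_ge (j + 1) pq.2 with hq | hq
      · -- pq ∈ Dw (j+1)
        have hmem : pq ∈ Dw n ⇑w (j + 1) := mem_Dw.mpr ⟨⟨hp1, by omega⟩, ⟨by omega, hq2⟩, hwpq⟩
        have hne : Dw n ⇑w (j + 1) ≠ ∅ := Finset.nonempty_iff_ne_empty.mp ⟨pq, hmem⟩
        rw [hwf, if_neg hne]
        exact Finset.le_sup hmem
      · calc pq.2 ≤ j + 1 := hq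
          _ ≤ hwf n ⇑w (j + 1) := hwf_lower n _ (j + 1)
end

section
/- Let w be a permutation of {1,…,n} and h : {1,…,n} → {1,…,n} a Hessenberg function. Then the following are equivalent: (i) for every j ∈ {1,…,n} with w(j) ≠ 1, w^{-1}(w(j)−1) ≤ h(j); (ii) h_w(j) ≤ h(j) for all j ∈ {1,…,n}. -/
/-- A Hessenberg function `h : {1,…,n} → {1,…,n}`: `h(i) ≥ i` for all `i ∈ {1,…,n}`
and `h(i+1) ≥ h(i)` for `i ∈ {1,…,n-1}`. -/
def IsHessenberg (n : ℕ) (h : ℕ → ℕ) : Prop :=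
  (∀ i, 1 ≤ i → i ≤ n → i ≤ h i ∧ h i ≤ n) ∧
  (∀ i, 1 ≤ i → i + 1 ≤ n → h i ≤ h (i + 1))

/-- For `w` a permutation of `{1,…,n}` (modelled as `w : Equiv.Perm ℕ` fixing every point
outside `{1,…,n}`) and `h` a Hessenberg function, the following are equivalent:
(i) for every `j ∈ {1,…,n}` with `w(j) ≠ 1`, `w⁻¹(w(j)−1) ≤ h(j)`;
(ii) `h_w(j) ≤ h(j)` for all `j ∈ {1,…,n}`. -/
theorem stmt3 (n : ℕ) (w : Equiv.Perm ℕ) (hw : ∀ i, i ∉ Finset.Icc 1 n → w i = i)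
    (h : ℕ → ℕ) (hh : IsHessenberg n h) :
    (∀ j, 1 ≤ j → j ≤ n → w j ≠ 1 → w.symm (w j - 1) ≤ h j) ↔
    (∀ j, 1 ≤ j → j ≤ n → hwf n ⇑w j ≤ h j) := by
  -- w maps [1,n] into [1,n]
  have winr : ∀ i, 1 ≤ i → i ≤ n → 1 ≤ w i ∧ w i ≤ n := by
    intro i h1 h2
    by_contra hc
    have : w i ∉ Finset.Icc 1 n := by
      simp only [Finset.mem_Icc]; tauto
    have := hw _ this
    have : w (w i) = w i := by rw [this]
    have : w i = i := w.injective this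
    rw [this] at hc
    exact hc ⟨h1, h2⟩
  have hw' : ∀ i, i ∉ Finset.Icc 1 n → w.symm i = i := by
    intro i hi
    have := hw i hi
    conv_lhs => rw [← this]
    exact w.symm_apply_apply i
  have wsinr : ∀ i, 1 ≤ i → i ≤ n → 1 ≤ w.symm i ∧ w.symm i ≤ n := by
    intro i h1 h2
    by_contra hc
    have : w.symm i ∉ Finset.Icc 1 n := by
      simp only [Finset.mem_Icc]; tauto
    have h3 := hw _ this
    have : i = w.symm i := by
      conv_lhs => rw [← w.apply_symm_apply i, h3]
    rw [← this] at hc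
    exact hc ⟨h1, h2⟩
  have hmono : ∀ p j, 1 ≤ p → p ≤ j → j ≤ n → h p ≤ h j := by
    intro p j h1 hpj hjn
    induction j, hpj using Nat.le_induction with
    | base => exact le_refl _
    | succ k hk ih =>
      exact le_trans (ih (le_trans (Nat.le_succ k) hjn))
        (hh.2 k (le_trans h1 hk) hjn)
  constructor
  · intro cond j h1 hn
    unfold hwf
    split
    · exact (hh.1 j h1 hn).1
    · apply Finset.sup_le
      intro pq hpq
      simp only [Dw, Finset.mem_filter, Finset.mem_product, Finset.mem_Icc] at hpq
      obtain ⟨⟨⟨hp1, hpj⟩, hq1, hqn⟩, heq⟩ := hpq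
      have hq1' : 1 ≤ pq.2 := le_trans (le_trans h1 (Nat.le_succ j)) hq1
      have hwq := winr pq.2 hq1' hqn
      have hwp1 : w pq.1 ≠ 1 := by omega
      have hcp := cond pq.1 hp1 (le_trans hpj hn) hwp1
      have : w pq.1 - 1 = w pq.2 := by omega
      rw [this, w.symm_apply_apply] at hcp
      exact le_trans hcp (hmono pq.1 j hp1 hpj hn)
  · intro cond j h1 hn hwj1
    have hwj := winr j h1 hn
    have hwj2 : 2 ≤ w j := by omega
    set q := w.symm (w j - 1) with hq
    have hq' := wsinr (w j - 1) (by omega) (by omega)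
    by_cases hqj : q ≤ j
    · exact le_trans hqj (hh.1 j h1 hn).1
    · push_neg at hqj
      have hwq : w q = w j - 1 := w.apply_symm_apply _
      have hmem : (j, q) ∈ Dw n ⇑w j := by
        simp only [Dw, Finset.mem_filter, Finset.mem_product, Finset.mem_Icc]
        refine ⟨⟨⟨h1, le_refl j⟩, hqj, hq'.2⟩, ?_⟩
        simp only [hwq]; omega
      have hne : Dw n ⇑w j ≠ ∅ := by
        intro hc; rw [hc] at hmem; exact absurd hmem (Finset.notMem_empty _)
      have hle : q ≤ hwf n ⇑w j := by
        unfold hwf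
        rw [if_neg hne]
        exact Finset.le_sup (f := fun pq => pq.2) hmem
      exact le_trans hle (cond j h1 hn)
end

section
/- Let w be a permutation of {1,…,n} and j ∈ {1,…,n−1}, and suppose D_w(j) ≠ ∅ (equivalently h_w(j) ≥ j+1). Then h_w(j) = w^{-1}(w(j)−1) if and only if h_w(j−1) < h_w(j), where by convention h_w(0) := 0 and w^{-1}(0) := 0 (the latter covering the case w(j) = 1). -/
/-- For `j ∈ {1,…,n-1}` with `D_w(j) ≠ ∅`, one has `h_w(j) = w⁻¹(w(j)−1)` iff
`h_w(j−1) < h_w(j)`.  A permutation of `{1,…,n}` is modelled as `w : Equiv.Perm ℕ`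
fixing every point outside `{1,…,n}`; then the conventions `h_w(0) = 0` and
`w⁻¹(0) = 0` hold automatically (`w j - 1` is truncated subtraction in `ℕ`,
so `w(j) = 1` gives `w⁻¹(0) = 0`). -/
theorem stmt4 (n : ℕ) (w : Equiv.Perm ℕ) (hw : ∀ i, i ∉ Finset.Icc 1 n → w i = i)
    (j : ℕ) (hj1 : 1 ≤ j) (hjn : j < n) (hD : Dw n ⇑w j ≠ ∅) :
    hwf n ⇑w j = w.symm (w j - 1) ↔ hwf n ⇑w (j - 1) < hwf n ⇑w j := by
  have hne : (Dw n ⇑w j).Nonempty := Finset.nonempty_iff_ne_empty.2 hD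
  have hH : hwf n ⇑w j = (Dw n ⇑w j).sup (fun pq => pq.2) := by
    simp [hwf, hD]
  obtain ⟨pq₀, hmem₀, hsup₀⟩ := Finset.exists_mem_eq_sup _ hne (fun pq => pq.2)
  have hmem₀' := mem_Dw.1 hmem₀
  obtain ⟨⟨hp1, hpj⟩, ⟨hq1, hqn⟩, hwpq⟩ := hmem₀'
  have hHq : hwf n ⇑w j = pq₀.2 := by rw [hH, hsup₀]
  have hHge : j + 1 ≤ hwf n ⇑w j := by omega
  have hHle : hwf n ⇑w j ≤ n := by omega
  have hw0 : w 0 = 0 := hw 0 (by simp)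
  have hsymm0 : w.symm 0 = 0 := by rw [Equiv.symm_apply_eq, hw0]
  have hwj0 : w j ≠ 0 := by
    intro h
    have : j = 0 := w.injective (by rw [h, hw0])
    omega
  constructor
  · intro heq
    have hwj2 : 2 ≤ w j := by
      rcases Nat.lt_or_ge (w j) 2 with h | h
      · exfalso
        have hwj1 : w j = 1 := by omega
        rw [hwj1] at heq
        simp only [Nat.sub_self, hsymm0] at heq
        omega
      · exact h
    have hwHval : ⇑w (hwf n ⇑w j) = ⇑w j - 1 := by rw [heq]; exact w.apply_symm_apply _
    by_cases hD' : Dw n ⇑w (j - 1) = ∅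
    · have h' : hwf n ⇑w (j - 1) = j - 1 := by simp [hwf, hD']
      omega
    · have h' : hwf n ⇑w (j - 1) = (Dw n ⇑w (j - 1)).sup (fun pq => pq.2) := by
        simp [hwf, hD']
      rw [h', Finset.sup_lt_iff (show (⊥ : ℕ) < hwf n ⇑w j by simp only [Nat.bot_eq_zero]; omega)]
      intro pq hpq
      have hpq' := mem_Dw.1 hpq
      obtain ⟨⟨hp1', hpj'⟩, ⟨hq1', hqn'⟩, hwpq'⟩ := hpq'
      by_cases hcase : j + 1 ≤ pq.2
      · have hmem : pq ∈ Dw n ⇑w j :=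
          mem_Dw.2 ⟨⟨hp1', by omega⟩, ⟨hcase, hqn'⟩, hwpq'⟩
        have hle : pq.2 ≤ hwf n ⇑w j := by
          rw [hH]; exact Finset.le_sup (f := fun pq : ℕ × ℕ => pq.2) hmem
        rcases lt_or_eq_of_le hle with h | h
        · exact h
        · exfalso
          have h1 : ⇑w pq.1 = ⇑w (hwf n ⇑w j) + 1 := by rw [hwpq', h]
          have h2 : ⇑w pq.1 = ⇑w j := by omega
          have h3 : pq.1 = j := w.injective h2
          omega
      · omega
  · intro hlt
    have hp0j : pq₀.1 = j := by
      by_contra hne'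
      have hmem : pq₀ ∈ Dw n ⇑w (j - 1) :=
        mem_Dw.2 ⟨⟨hp1, by omega⟩, ⟨by omega, hqn⟩, hwpq⟩
      have hD' : Dw n ⇑w (j - 1) ≠ ∅ := Finset.ne_empty_of_mem hmem
      have h' : hwf n ⇑w (j - 1) = (Dw n ⇑w (j - 1)).sup (fun pq => pq.2) := by
        simp [hwf, hD']
      have hge : hwf n ⇑w j ≤ hwf n ⇑w (j - 1) := by
        rw [hHq, h']
        exact Finset.le_sup (f := fun pq : ℕ × ℕ => pq.2) hmem
      omega
    have hwj : ⇑w j = ⇑w pq₀.2 + 1 := by rw [← hp0j]; exact hwpq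
    rw [hHq, hwj]
    simp
end

section
/- Let h : {1,…,n} → {1,…,n} be a Hessenberg function and let I_h be the ideal of ℚ[x_1,…,x_n,t] generated by f_{h(1),1}, f_{h(2),2}, …, f_{h(n),n}. Then for every j ∈ {1,…,n} and every i with h(j) ≤ i ≤ n, the polynomial f_{i,j} lies in I_h. Consequently, if h and h′ are Hessenberg functions with h(j) ≤ h′(j) for all j, then I_{h′} ⊆ I_h. -/
/-- The variable `x_k` (for `1 ≤ k ≤ n`) in `ℚ[x_1,…,x_n,t]`, realized as
`MvPolynomial (Fin (n+1)) ℚ` where the variable of index `0` is `t` and the variable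
of index `k` (for `1 ≤ k ≤ n`) is `x_k`. -/
noncomputable def xv (n k : ℕ) : MvPolynomial (Fin (n + 1)) ℚ :=
  if h : k ≤ n then MvPolynomial.X ⟨k, Nat.lt_succ_of_le h⟩ else 0

/-- The variable `t` in `ℚ[x_1,…,x_n,t]`. -/
noncomputable def tv (n : ℕ) : MvPolynomial (Fin (n + 1)) ℚ :=
  MvPolynomial.X 0

/-- `p_i := Σ_{k=1}^{i} (x_k − k·t)`, with `p_0 = 0`. -/
noncomputable def pp (n i : ℕ) : MvPolynomial (Fin (n + 1)) ℚ :=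
  ∑ k ∈ Finset.Icc 1 i, (xv n k - (k : MvPolynomial (Fin (n + 1)) ℚ) * tv n)

/-- The polynomials `f_{i,j}`: `f_{j,j} = p_j`, `f_{i,0} = 0`, and
`f_{i,j} = f_{i−1,j−1} + (x_j − x_i − t)·f_{i−1,j}` for `i > j ≥ 1`. -/
noncomputable def ff (n : ℕ) : ℕ → ℕ → MvPolynomial (Fin (n + 1)) ℚ
  | _, 0 => 0
  | 0, _ + 1 => 0
  | i + 1, j + 1 =>
    if i + 1 = j + 1 then pp n (j + 1)
    else ff n i j + (xv n (j + 1) - xv n (i + 1) - tv n) * ff n i (j + 1)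

/-- The ideal `I_h` of `ℚ[x_1,…,x_n,t]` generated by `f_{h(1),1},…,f_{h(n),n}`. -/
noncomputable def Ih (n : ℕ) (h : ℕ → ℕ) : Ideal (MvPolynomial (Fin (n + 1)) ℚ) :=
  Ideal.span ((fun j => ff n (h j) j) '' Set.Icc 1 n)

lemma ff_zero_right (n i : ℕ) : ff n i 0 = 0 := by
  cases i <;> rfl

lemma ff_succ_succ (n : ℕ) {i j : ℕ} (hji : j < i) :
    ff n (i + 1) (j + 1) =
      ff n i j + (xv n (j + 1) - xv n (i + 1) - tv n) * ff n i (j + 1) := by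
  rw [ff, if_neg (by omega)]

lemma ff_generator_mem_Ih (n : ℕ) (h : ℕ → ℕ) {j : ℕ} (hj : 1 ≤ j) (hjn : j ≤ n) :
    ff n (h j) j ∈ Ih n h :=
  Ideal.subset_span ⟨j, ⟨hj, hjn⟩, rfl⟩

lemma ff_mem_Ih {n : ℕ} {h : ℕ → ℕ} (hh : IsHessenberg n h) {j : ℕ} (hj : 1 ≤ j)
    (hjn : j ≤ n) {i : ℕ} (hi : h j ≤ i) : ff n i j ∈ Ih n h := by
  induction j generalizing i with
  | zero => omega
  | succ j ihj =>
    induction i, hi using Nat.le_induction with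
    | base => exact ff_generator_mem_Ih n h hj hjn
    | succ i hi ihi =>
      have hji : j < i := (hh.1 (j + 1) hj hjn).1.trans hi
      have hprev : ff n i j ∈ Ih n h := by
        rcases Nat.eq_zero_or_pos j with rfl | hj0
        · exact ff_zero_right n i ▸ zero_mem _
        · exact ihj hj0 (by omega) ((hh.2 j hj0 hjn).trans hi)
      rw [ff_succ_succ n hji]
      exact add_mem hprev (Ideal.mul_mem_left _ _ ihi)

/-- For a Hessenberg function `h`, `f_{i,j} ∈ I_h` for all `j ∈ {1,…,n}` and
`h(j) ≤ i ≤ n`; consequently, if `h(j) ≤ h'(j)` for all `j` then `I_{h'} ⊆ I_h`. -/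
theorem stmt5 (n : ℕ) (h : ℕ → ℕ) (hh : IsHessenberg n h) :
    (∀ j, 1 ≤ j → j ≤ n → ∀ i, h j ≤ i → i ≤ n → ff n i j ∈ Ih n h) ∧
    (∀ h' : ℕ → ℕ, IsHessenberg n h' → (∀ j, 1 ≤ j → j ≤ n → h j ≤ h' j) →
      Ih n h' ≤ Ih n h) := by
  refine ⟨fun j hj hjn i hi _ => ff_mem_Ih hh hj hjn hi, fun h' _ hle => ?_⟩
  rw [Ih, Ideal.span_le]
  rintro _ ⟨j, ⟨hj, hjn⟩, rfl⟩
  exact ff_mem_Ih hh hj hjn (hle j hj hjn)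
end

section
/- For every pair k, j ∈ {1,…,n} with k ≥ j, the polynomial b_{k,j} ∈ ℚ[u_1,…,u_n,t] is symmetric in the variables u_1,…,u_j: for every permutation σ of {1,…,j}, the ℚ-algebra automorphism of ℚ[u_1,…,u_n,t] sending u_r ↦ u_{σ(r)} for r ≤ j and fixing u_r for r > j and fixing t, maps b_{k,j} to itself. -/
/-! The column `b_{·,j}` arises from `b_{·,j-1}` by an operator that depends only on `u_j` and `t`.
Applying two such operators in a row, with variables `v` and `w`, gives a sequence whose first two
nonzero terms are symmetric in `v, w` and which satisfies a two-step recurrence with the symmetric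
coefficients `v + w` and `v * w`; hence consecutive operators commute. So `b_{·,j}` depends only on
the multiset `{u_1, …, u_j}`, which a substitution permuting `u_1, …, u_j` and fixing `t` preserves. -/

/-- The variable `u_k` (for `1 ≤ k ≤ n`) in `ℚ[u_1,…,u_n,t]`, realized as
`MvPolynomial (Fin (n+1)) ℚ` where the variable of index `0` is `t` and the variable
of index `k` (for `1 ≤ k ≤ n`) is `u_k`. -/
noncomputable def uv (n k : ℕ) : MvPolynomial (Fin (n + 1)) ℚ :=
  if h : k ≤ n then MvPolynomial.X ⟨k, Nat.lt_succ_of_le h⟩ else 0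

/-- `b_{j,j} := Σ_{k=1}^{j} (u_k − (k−1)·t)`. -/
noncomputable def bbase (n j : ℕ) : MvPolynomial (Fin (n + 1)) ℚ :=
  ∑ r ∈ Finset.Icc 1 j, (uv n r - ((r : MvPolynomial (Fin (n + 1)) ℚ) - 1) * tv n)

/-- The polynomials `b_{k,j}`: `b_{j,j} = Σ_{r=1}^{j}(u_r − (r−1)t)`, `b_{k,0} = 0`,
and `b_{k+1,j} = b_{k,j−1} + u_j·b_{k,j} − (u_j + t)·b_{k−1,j−1}` for `k ≥ j`. -/
noncomputable def bb (n : ℕ) : ℕ → ℕ → MvPolynomial (Fin (n + 1)) ℚ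
  | _, 0 => 0
  | 0, _ + 1 => 0
  | 1, j + 1 => if 1 = j + 1 then bbase n (j + 1) else 0
  | k + 2, j + 1 =>
    if k + 2 = j + 1 then bbase n (j + 1)
    else if k + 2 < j + 1 then 0
    else bb n (k + 1) j + uv n (j + 1) * bb n (k + 1) (j + 1)
      - (uv n (j + 1) + tv n) * bb n k j

section Column

variable {R : Type*} [CommRing R]

/-- Column `j` of the triangle computed from column `j - 1` (given as `a`), with `v` in the role
of `u_j`. -/
def nextColumn (j : ℕ) (v t : R) (a : ℕ → R) : ℕ → R
  | 0 => 0
  | k + 1 =>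
    if k + 1 < j then 0
    else if k + 1 = j then a k + v - k * t
    else a k + v * nextColumn j v t a k - (v + t) * a (k - 1)

variable (v w t : R) (a : ℕ → R)

lemma nextColumn_of_lt {j k : ℕ} (h : k < j) : nextColumn j v t a k = 0 := by
  cases k with
  | zero => rfl
  | succ k => simp [nextColumn, h]

lemma nextColumn_self (m : ℕ) : nextColumn (m + 1) v t a (m + 1) = a m + v - m * t := by
  simp [nextColumn]

lemma nextColumn_add_two {j k : ℕ} (h : j ≤ k + 1) :
    nextColumn j v t a (k + 2) = a (k + 1) + v * nextColumn j v t a (k + 1) - (v + t) * a k := by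
  rw [nextColumn, if_neg (by omega), if_neg (by omega)]
  rfl

lemma nextColumn_nextColumn_self (m : ℕ) :
    nextColumn (m + 2) w t (nextColumn (m + 1) v t a) (m + 2) =
      a m + v + w - (2 * m + 1) * t := by
  rw [nextColumn_self w t _ (m + 1), nextColumn_self]
  push_cast
  ring

lemma nextColumn_nextColumn_self_add_one (m : ℕ) :
    nextColumn (m + 2) w t (nextColumn (m + 1) v t a) (m + 3) =
      a (m + 1) - 2 * t * a m + v ^ 2 + w ^ 2 - (m + 1) * t * (v + w) + m * t ^ 2 := by
  rw [nextColumn_add_two w t _ (by omega), nextColumn_self w t _ (m + 1),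
    nextColumn_add_two v t a (by omega), nextColumn_self]
  push_cast
  ring

lemma nextColumn_nextColumn_add_four {m l : ℕ} (h : m ≤ l) :
    nextColumn (m + 2) w t (nextColumn (m + 1) v t a) (l + 4) =
      (v + w) * nextColumn (m + 2) w t (nextColumn (m + 1) v t a) (l + 3)
      - v * w * nextColumn (m + 2) w t (nextColumn (m + 1) v t a) (l + 2)
      + a (l + 2) - (v + w + 2 * t) * a (l + 1) + (v + t) * (w + t) * a l := by
  rw [nextColumn_add_two w t _ (by omega), nextColumn_add_two w t _ (k := l + 1) (by omega),
    nextColumn_add_two v t a (k := l + 1) (by omega), nextColumn_add_two v t a (k := l) (by omega)]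
  ring

lemma nextColumn_comm (m : ℕ) :
    nextColumn (m + 2) w t (nextColumn (m + 1) v t a) =
      nextColumn (m + 2) v t (nextColumn (m + 1) w t a) := by
  funext k
  induction k using Nat.strong_induction_on with
  | _ k ih =>
  rcases lt_or_ge k (m + 2) with hk | hk
  · rw [nextColumn_of_lt _ _ _ hk, nextColumn_of_lt _ _ _ hk]
  obtain rfl | rfl | hk : k = m + 2 ∨ k = m + 3 ∨ m + 4 ≤ k := by omega
  · rw [nextColumn_nextColumn_self, nextColumn_nextColumn_self]
    ring
  · rw [nextColumn_nextColumn_self_add_one, nextColumn_nextColumn_self_add_one]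
    ring
  · obtain ⟨l, rfl⟩ : ∃ l, k = l + 4 := ⟨k - 4, by omega⟩
    have hl : m ≤ l := by omega
    rw [nextColumn_nextColumn_add_four _ _ _ _ hl, nextColumn_nextColumn_add_four _ _ _ _ hl,
      ih (l + 3) (by omega), ih (l + 2) (by omega)]
    ring

def columnOf (t : R) : List R → ℕ → R
  | [] => 0
  | v :: l => nextColumn (l.length + 1) v t (columnOf t l)

lemma columnOf_perm {l₁ l₂ : List R} (h : l₁.Perm l₂) : columnOf t l₁ = columnOf t l₂ := by
  induction h with
  | nil => rfl
  | cons v h ih => simp only [columnOf, ih, h.length_eq]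
  | swap v w l => exact nextColumn_comm v w t (columnOf t l) l.length
  | trans _ _ ih₁ ih₂ => rw [ih₁, ih₂]

variable {S F : Type*} [CommRing S] [FunLike F R S] [RingHomClass F R S] (f : F)

lemma map_nextColumn (j k : ℕ) :
    f (nextColumn j v t a k) = nextColumn j (f v) (f t) (f ∘ a) k := by
  induction k with
  | zero => simp [nextColumn]
  | succ k ih =>
    simp only [nextColumn]
    split_ifs <;> simp [ih]

lemma map_columnOf (l : List R) (k : ℕ) : f (columnOf t l k) = columnOf (f t) (l.map f) k := by
  induction l generalizing k with
  | nil => simp [columnOf]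
  | cons v l ih =>
    simp only [columnOf, List.map_cons, List.length_map, map_nextColumn]
    congr
    exact funext ih

end Column

lemma List.perm_map_self_of_injective {α : Type*} {l : List α} (hl : l.Nodup) {f : α → α}
    (hf : Function.Injective f) (hmaps : ∀ x ∈ l, f x ∈ l) : (l.map f).Perm l :=
  ((hl.map hf).subperm fun _ hy ↦ by
    obtain ⟨x, hx, rfl⟩ := List.mem_map.1 hy
    exact hmaps x hx).perm_of_length_le (by simp)

lemma bb_of_lt (n : ℕ) {k j : ℕ} (h : k < j) : bb n k j = 0 := by
  match k, j with
  | 0, j + 1 => rw [bb]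
  | 1, j + 1 => rw [bb, if_neg (by omega)]
  | k + 2, j + 1 => rw [bb, if_neg (by omega), if_pos (by omega)]

lemma bb_self (n j : ℕ) : bb n j j = bbase n j := by
  match j with
  | 0 => simp [bb, bbase]
  | 1 => rw [bb, if_pos rfl]
  | j + 2 => rw [bb, if_pos rfl]

lemma bbase_succ (n j : ℕ) : bbase n (j + 1) = bbase n j + (uv n (j + 1) - j * tv n) := by
  rw [bbase, bbase, Finset.sum_Icc_succ_top (by omega)]
  push_cast
  ring

lemma bb_succ_eq_nextColumn (n j : ℕ) :
    (bb n · (j + 1)) = nextColumn (j + 1) (uv n (j + 1)) (tv n) (bb n · j) := by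
  funext k
  induction k with
  | zero => exact bb_of_lt n (by omega)
  | succ k ih =>
    rcases Nat.lt_trichotomy (k + 1) (j + 1) with h | h | h
    · rw [nextColumn_of_lt _ _ _ h, bb_of_lt n h]
    · obtain rfl : k = j := by omega
      rw [nextColumn_self, bb_self, bbase_succ, bb_self]
      ring
    · obtain ⟨m, rfl⟩ : ∃ m, k = m + 1 := ⟨k - 1, by omega⟩
      rw [nextColumn_add_two _ _ _ (by omega), ← ih, bb, if_neg (by omega),
        if_neg (by omega)]

lemma bb_eq_columnOf (n j : ℕ) :
    (bb n · j) = columnOf (tv n) ((List.range' 1 j).reverse.map (uv n)) := by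
  induction j with
  | zero => funext k; simp [bb, columnOf]
  | succ j ih =>
    rw [bb_succ_eq_nextColumn, ih, List.range'_1_concat]
    simp [columnOf, add_comm 1 j]

theorem stmt6_general (n k j : ℕ) (hk : j ≤ k) (hkn : k ≤ n)
    (σ : Equiv.Perm ℕ)
    (hσ1 : ∀ r ∈ Finset.Icc 1 j, σ r ∈ Finset.Icc 1 j)
    (hσ2 : ∀ r, r ∉ Finset.Icc 1 j → σ r = r) :
    MvPolynomial.aeval (fun v : Fin (n + 1) => uv n (σ (v : ℕ))) (bb n k j) = bb n k j := by
  set φ := MvPolynomial.aeval (R := ℚ) (fun v : Fin (n + 1) => uv n (σ (v : ℕ)))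
  set L := (List.range' 1 j).reverse
  have hL : ∀ r, r ∈ L ↔ r ∈ Finset.Icc 1 j := fun r ↦ by
    simp only [L, List.mem_reverse, List.mem_range'_1, Finset.mem_Icc]
    omega
  have hφt : φ (tv n) = tv n := by simp [φ, tv, uv, hσ2 0 (by simp)]
  have hφu : ∀ r ∈ L, φ (uv n r) = uv n (σ r) := fun r hr ↦ by
    have : r ≤ n := by rw [hL, Finset.mem_Icc] at hr; omega
    simp [φ, uv, this]
  have hσL : (L.map σ).Perm L :=
    List.perm_map_self_of_injective (by simp [L, List.nodup_range']) σ.injective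
      fun r hr ↦ (hL _).2 (hσ1 r ((hL r).1 hr))
  calc φ (bb n k j) = columnOf (tv n) ((L.map σ).map (uv n)) k := by
        rw [congrFun (bb_eq_columnOf n j) k, map_columnOf, hφt, List.map_map, List.map_map]
        exact congrArg (columnOf (tv n) · k) (List.map_congr_left hφu)
    _ = bb n k j := by rw [columnOf_perm _ (hσL.map _), congrFun (bb_eq_columnOf n j) k]

/-- For `k ≥ j` in `{1,…,n}`, `b_{k,j}` is symmetric in `u_1,…,u_j`: the `ℚ`-algebra
homomorphism sending `u_r ↦ u_{σ(r)}` (which fixes `u_r` for `r > j` and fixes `t`,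
since `σ` is a permutation of `{1,…,j}` fixing everything else) maps `b_{k,j}` to itself. -/
theorem stmt6 (n k j : ℕ) (hj : 1 ≤ j) (hk : j ≤ k) (hkn : k ≤ n)
    (σ : Equiv.Perm ℕ)
    (hσ1 : ∀ r ∈ Finset.Icc 1 j, σ r ∈ Finset.Icc 1 j)
    (hσ2 : ∀ r, r ∉ Finset.Icc 1 j → σ r = r) :
    MvPolynomial.aeval (fun v : Fin (n + 1) => uv n (σ (v : ℕ))) (bb n k j) = bb n k j :=
  stmt6_general n k j hk hkn σ hσ1 hσ2
end

section
/- Let h : {1,…,n} → {1,…,n} be a Hessenberg function and let w be a permutation of {1,…,n} such that for every j ∈ {1,…,n} with w(j) ≠ 1 one has w^{-1}(w(j)−1) ≤ h(j). Then f_{h(j),j}(w) = 0 in ℚ[t] for every j ∈ {1,…,n}. -/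
/-- The `ℚ`-algebra homomorphism `ℚ[x_1,…,x_n,t] → ℚ[t]` sending `x_r ↦ w(r)·t` and
`t ↦ t`; applied to `f_{i,j}` it yields `f_{i,j}(w)`. -/
noncomputable def evf (n : ℕ) (w : ℕ → ℕ) : MvPolynomial (Fin (n + 1)) ℚ →ₐ[ℚ] Polynomial ℚ :=
  MvPolynomial.aeval fun v : Fin (n + 1) =>
    if (v : ℕ) = 0 then Polynomial.X else Polynomial.C ((w (v : ℕ) : ℚ)) * Polynomial.X

/-!
Under `x_r ↦ a_r t`, `t ↦ t` the polynomial `f_{i,j}` becomes `c_{i,j}(a) t^{i-j+1}`, and for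
pairwise distinct `a_k` the scalars `c_{i,j}` have the closed form
`c_{i,j} = ∑_{k ≤ j} (a_k - 1) u_k ∏_{j < l ≤ i} (a_k - a_l - 1)` with
`u_k = ∏_{l ≤ j, l ≠ k} (a_k - a_l - 1) / (a_k - a_l)`: it satisfies the recursion of `f`, and on
the diagonal it reduces to `∑_{k ≤ j} (a_k - k)` by the partial fraction expansion of
`∏_l (x - a_l - 1) / (x - a_l)`. For `a = w`, the hypothesis puts `w⁻¹(w(k) - 1)` in `[1, h(j)]`
for every `k ≤ j` with `w(k) ≠ 1`, so the factor `a_k - a_l - 1` with `l = w⁻¹(w(k) - 1)` kills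
the `k`-th summand: in `u_k` if `l ≤ j`, in the product if `l > j`.
-/

open Finset Polynomial

section PartialFractions

variable {ι K : Type*} [DecidableEq ι] [Field K] (a : ι → K)

noncomputable def shiftCoeff (S : Finset ι) (k : ι) : K :=
  ∏ l ∈ S.erase k, (a k - a l - 1) / (a k - a l)

variable {a}

lemma shiftCoeff_insert_self {S : Finset ι} {c : ι} (hc : c ∉ S) :
    shiftCoeff a (insert c S) c = ∏ l ∈ S, (a c - a l - 1) / (a c - a l) := by
  rw [shiftCoeff, erase_insert hc]

lemma shiftCoeff_insert {S : Finset ι} {c k : ι} (hc : c ∉ S) (hk : k ∈ S) :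
    shiftCoeff a (insert c S) k = shiftCoeff a S k * ((a k - a c - 1) / (a k - a c)) := by
  rw [shiftCoeff, erase_insert_of_ne (ne_of_mem_of_not_mem hk hc).symm,
    prod_insert (fun h => hc (mem_of_mem_erase h)), mul_comm, shiftCoeff]

lemma shiftCoeff_insert_of_mem (ha : Function.Injective a) {S : Finset ι} {c k : ι} (hc : c ∉ S)
    (hk : k ∈ S) :
    shiftCoeff a (insert c S) k = shiftCoeff a S k + shiftCoeff a S k / (a c - a k) := by
  have hkc : a k - a c ≠ 0 := sub_ne_zero.2 (ha.ne (ne_of_mem_of_not_mem hk hc))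
  have hck : a c - a k ≠ 0 := sub_ne_zero.2 (ha.ne (ne_of_mem_of_not_mem hk hc).symm)
  rw [shiftCoeff_insert hc hk]
  field_simp
  ring

lemma prod_shift_div_eq_one_sub_sum (ha : Function.Injective a) {S : Finset ι} {b : ι}
    (hb : b ∉ S) :
    ∏ l ∈ S, (a b - a l - 1) / (a b - a l) = 1 - ∑ k ∈ S, shiftCoeff a S k / (a b - a k) := by
  induction S using Finset.induction_on generalizing b with
  | empty => simp
  | @insert c S hc IH =>
    have hbS : b ∉ S := fun h => hb (mem_insert_of_mem h)
    have hbc : a b - a c ≠ 0 := sub_ne_zero.2 (ha.ne fun h => hb (h ▸ mem_insert_self c S))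
    have hsum : ∑ k ∈ S, shiftCoeff a (insert c S) k / (a b - a k) =
        (a b - a c - 1) / (a b - a c) * ∑ k ∈ S, shiftCoeff a S k / (a b - a k) +
          (∑ k ∈ S, shiftCoeff a S k / (a c - a k)) / (a b - a c) := by
      rw [mul_sum, sum_div, ← sum_add_distrib]
      refine sum_congr rfl fun k hk => ?_
      have hbk : a b - a k ≠ 0 := sub_ne_zero.2 (ha.ne (ne_of_mem_of_not_mem hk hbS).symm)
      have hck : a c - a k ≠ 0 := sub_ne_zero.2 (ha.ne (ne_of_mem_of_not_mem hk hc).symm)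
      rw [shiftCoeff_insert_of_mem ha hc hk]
      field_simp
      ring
    rw [prod_insert hc, sum_insert hc, IH hbS, shiftCoeff_insert_self hc, IH hc, hsum]
    field_simp
    ring

lemma shiftCoeff_insert_self_eq_one_sub_sum (ha : Function.Injective a) {S : Finset ι} {c : ι}
    (hc : c ∉ S) :
    shiftCoeff a (insert c S) c = 1 - ∑ k ∈ S, shiftCoeff a S k / (a c - a k) := by
  rw [shiftCoeff_insert_self hc, prod_shift_div_eq_one_sub_sum ha hc]

lemma sum_shiftCoeff (ha : Function.Injective a) (S : Finset ι) :
    ∑ k ∈ S, shiftCoeff a S k = S.card := by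
  induction S using Finset.induction_on with
  | empty => simp
  | @insert c S hc IH =>
    rw [sum_insert hc, shiftCoeff_insert_self_eq_one_sub_sum ha hc,
      sum_congr rfl fun k hk => shiftCoeff_insert_of_mem ha hc hk, sum_add_distrib, IH,
      card_insert_of_notMem hc]
    push_cast
    ring

lemma sum_sub_one_mul_shiftCoeff (ha : Function.Injective a) (S : Finset ι) :
    ∑ k ∈ S, (a k - 1) * shiftCoeff a S k = ∑ k ∈ S, a k - ∑ m ∈ Icc 1 S.card, (m : K) := by
  induction S using Finset.induction_on with
  | empty => simp
  | @insert c S hc IH =>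
    have hsum : ∑ k ∈ S, (a k - 1) * shiftCoeff a (insert c S) k =
        ∑ k ∈ S, (a k - 1) * shiftCoeff a S k +
          (a c - 1) * ∑ k ∈ S, shiftCoeff a S k / (a c - a k) - ∑ k ∈ S, shiftCoeff a S k := by
      rw [mul_sum, ← sum_add_distrib, ← sum_sub_distrib]
      refine sum_congr rfl fun k hk => ?_
      have hck : a c - a k ≠ 0 := sub_ne_zero.2 (ha.ne (ne_of_mem_of_not_mem hk hc).symm)
      rw [shiftCoeff_insert_of_mem ha hc hk]
      field_simp
      ring
    rw [sum_insert hc, sum_insert hc, shiftCoeff_insert_self_eq_one_sub_sum ha hc, hsum, IH,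
      sum_shiftCoeff ha, card_insert_of_notMem hc,
      ← insert_Icc_right_eq_Icc_add_one (by omega), sum_insert (by simp)]
    push_cast
    ring

end PartialFractions

section ClosedForm

variable {K : Type*} [Field K] (a : ℕ → K)

noncomputable def ffCoeff (i j : ℕ) : K :=
  ∑ k ∈ Icc 1 j, (a k - 1) * shiftCoeff a (Icc 1 j) k * ∏ l ∈ Ioc j i, (a k - a l - 1)

variable {a}

lemma ffCoeff_zero_right (i : ℕ) : ffCoeff a i 0 = 0 := by
  simp [ffCoeff]

lemma ffCoeff_self (ha : Function.Injective a) (j : ℕ) :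
    ffCoeff a j j = ∑ k ∈ Icc 1 j, (a k - k) := by
  simp only [ffCoeff, Ioc_self, prod_empty, mul_one]
  rw [sum_sub_one_mul_shiftCoeff ha, Nat.card_Icc, Nat.add_sub_cancel, sum_sub_distrib]

lemma ffCoeff_succ_succ (ha : Function.Injective a) {i j : ℕ} (hji : j < i) :
    ffCoeff a (i + 1) (j + 1) =
      ffCoeff a i j + (a (j + 1) - a (i + 1) - 1) * ffCoeff a i (j + 1) := by
  set S := Icc 1 j
  set c := j + 1
  have hc : c ∉ S := by simp [S, c]
  have hS : Icc 1 c = insert c S := (insert_Icc_right_eq_Icc_add_one (by omega)).symm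
  set Q : ℕ → K := fun k => ∏ l ∈ Ioc c i, (a k - a l - 1)
  have hQ : ∀ k, ∏ l ∈ Ioc j i, (a k - a l - 1) = (a k - a c - 1) * Q k := fun k => by
    rw [← insert_Ioc_add_one_left_eq_Ioc hji, prod_insert (by simp)]
  have hkey : ∀ k ∈ S, shiftCoeff a (insert c S) k * (a k - a c) =
      shiftCoeff a S k * (a k - a c - 1) := fun k hk => by
    have hkc : a k - a c ≠ 0 := sub_ne_zero.2 (ha.ne (ne_of_mem_of_not_mem hk hc))
    rw [shiftCoeff_insert hc hk, mul_assoc, div_mul_cancel₀ _ hkc]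
  calc ffCoeff a (i + 1) c
      = ∑ k ∈ insert c S, ((a k - 1) * shiftCoeff a (insert c S) k * Q k * (a k - a c) +
          (a c - a (i + 1) - 1) * ((a k - 1) * shiftCoeff a (insert c S) k * Q k)) := by
        rw [ffCoeff, hS, ← insert_Ioc_right_eq_Ioc_add_one (by omega)]
        refine sum_congr rfl fun k _ => ?_
        rw [prod_insert (by simp)]
        ring
    _ = ∑ k ∈ S, (a k - 1) * shiftCoeff a S k * ((a k - a c - 1) * Q k) +
          (a c - a (i + 1) - 1) *
            ∑ k ∈ insert c S, (a k - 1) * shiftCoeff a (insert c S) k * Q k := by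
        rw [sum_add_distrib, ← mul_sum, sum_insert hc, sub_self, mul_zero, zero_add]
        congr 1
        refine sum_congr rfl fun k hk => ?_
        linear_combination (a k - 1) * Q k * hkey k hk
    _ = ffCoeff a i j + (a c - a (i + 1) - 1) * ffCoeff a i c := by
        simp only [ffCoeff, hQ, hS]
        rfl

lemma ffCoeff_eq_zero {i j : ℕ} (hpred : ∀ k ∈ Icc 1 j, a k ≠ 1 → ∃ m ∈ Icc 1 i, a m = a k - 1) :
    ffCoeff a i j = 0 := by
  refine sum_eq_zero fun k hk => ?_
  by_cases hk1 : a k = 1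
  · rw [hk1, sub_self, zero_mul, zero_mul]
  obtain ⟨m, hm, ham⟩ := hpred k hk hk1
  have hfactor : a k - a m - 1 = 0 := by rw [ham]; ring
  have hmk : m ≠ k := by
    rintro rfl
    exact one_ne_zero (sub_eq_self.mp ham.symm)
  rw [mem_Icc] at hm hk
  rcases le_or_gt m j with hmj | hjm
  · have hshift : shiftCoeff a (Icc 1 j) k = 0 :=
      prod_eq_zero (mem_erase.2 ⟨hmk, mem_Icc.2 ⟨hm.1, hmj⟩⟩) (by rw [hfactor, zero_div])
    rw [hshift, mul_zero, zero_mul]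
  · rw [prod_eq_zero (mem_Ioc.2 ⟨hjm, hm.2⟩) hfactor, mul_zero]

end ClosedForm

section Evaluation

variable {n : ℕ} {w : ℕ → ℕ}

lemma evf_tv : evf n w (tv n) = X := by
  simp [evf, tv]

lemma evf_xv {k : ℕ} (hk : 1 ≤ k) (hkn : k ≤ n) : evf n w (xv n k) = C (w k : ℚ) * X := by
  simp [evf, xv, hkn, Nat.one_le_iff_ne_zero.1 hk]

lemma evf_pp {i : ℕ} (hin : i ≤ n) :
    evf n w (pp n i) = C (∑ k ∈ Icc 1 i, ((w k : ℚ) - k)) * X := by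
  rw [pp, map_sum, map_sum, sum_mul]
  refine sum_congr rfl fun k hk => ?_
  rw [mem_Icc] at hk
  rw [map_sub, map_mul, evf_xv hk.1 (hk.2.trans hin), evf_tv, map_natCast (evf n w) k,
    ← C_eq_natCast, C_sub, sub_mul]

lemma evf_ff (hw : Function.Injective w) {i j : ℕ} (hin : i ≤ n) (hji : j ≤ i) :
    evf n w (ff n i j) = C (ffCoeff (fun k => (w k : ℚ)) i j) * X ^ (i - j + 1) := by
  have ha : Function.Injective fun k => (w k : ℚ) := Nat.cast_injective.comp hw
  induction i generalizing j with
  | zero => simp [Nat.le_zero.1 hji, ff, ffCoeff_zero_right]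
  | succ i IH =>
    rcases j with _ | j
    · simp [ff, ffCoeff_zero_right]
    by_cases hij : i = j
    · subst hij
      simp [ff, evf_pp hin, ffCoeff_self ha]
    have hji : j < i := by omega
    obtain ⟨m, rfl⟩ := Nat.exists_eq_add_of_lt hji
    rw [ff, if_neg (by omega), map_add, map_mul, map_sub, map_sub, evf_tv,
      evf_xv (by omega) (by omega), evf_xv (by omega) hin, IH (by omega) hji.le,
      IH (by omega) (by omega), ffCoeff_succ_succ ha hji]
    rw [show j + m + 1 + 1 - (j + 1) + 1 = m + 2 by omega, show j + m + 1 - j + 1 = m + 2 by omega,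
      show j + m + 1 - (j + 1) + 1 = m + 1 by omega]
    simp only [map_add, map_mul, map_sub, map_one]
    ring

end Evaluation

lemma IsHessenberg.monotoneOn {n : ℕ} {h : ℕ → ℕ} (hh : IsHessenberg n h) :
    MonotoneOn h (Set.Icc 1 n) :=
  monotoneOn_of_le_add_one Set.ordConnected_Icc fun i _ hi hi1 => hh.2 i hi.1 hi1.2

/-- Let `h` be a Hessenberg function and `w` a permutation of `{1,…,n}` (modelled as
`w : Equiv.Perm ℕ` fixing every point outside `{1,…,n}`) such that for every
`j ∈ {1,…,n}` with `w(j) ≠ 1` one has `w⁻¹(w(j)−1) ≤ h(j)`.  Then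
`f_{h(j),j}(w) = 0` in `ℚ[t]` for every `j ∈ {1,…,n}`. -/
theorem stmt9 (n : ℕ) (h : ℕ → ℕ) (hh : IsHessenberg n h)
    (w : Equiv.Perm ℕ) (hw : ∀ r, r ∉ Finset.Icc 1 n → w r = r)
    (hfix : ∀ j, 1 ≤ j → j ≤ n → w j ≠ 1 → w.symm (w j - 1) ≤ h j) :
    ∀ j, 1 ≤ j → j ≤ n → evf n ⇑w (ff n (h j) j) = 0 := by
  intro j hj1 hjn
  obtain ⟨hjh, hhn⟩ := hh.1 j hj1 hjn
  rw [evf_ff w.injective hhn hjh, ffCoeff_eq_zero, map_zero, zero_mul]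
  intro k hk hk1
  rw [mem_Icc] at hk
  have hw0 : w 0 = 0 := hw 0 (by simp)
  have hwk : 2 ≤ w k := by
    have : w k ≠ w 0 := w.injective.ne (by omega)
    have : w k ≠ 1 := by exact_mod_cast hk1
    omega
  refine ⟨w.symm (w k - 1), mem_Icc.2 ⟨?_, ?_⟩, ?_⟩
  · rw [Nat.one_le_iff_ne_zero, Ne, Equiv.symm_apply_eq, hw0]
    omega
  · exact (hfix k hk.1 (hk.2.trans hjn) (by omega)).trans
      (hh.monotoneOn ⟨hk.1, hk.2.trans hjn⟩ ⟨hj1, hjn⟩ hk.2)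
  · rw [Equiv.apply_symm_apply, Nat.cast_sub (by omega), Nat.cast_one]
end
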